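/- Let u ∈ S_n. For any 1 ≤ i < j ≤ n, the standardization of the restriction of the RSK insertion tableau P(u) to the values [i,j] (via jeu de taquin) equals the insertion tableau of the standardized subword st(u_{[i,j]}). -/

import Mathlib

/-- `u` is the one-line word of a permutation of `{1, …, n}`. -/
def IsPermWord (n : ℕ) (u : List ℕ) : Prop := u.Perm (List.range' 1 n)

/-- The left inversion set of a word `u`. -/
def InvW (u : List ℕ) : Set (ℕ × ℕ) :=
  {p | p.1 < p.2 ∧ p.1 ∈ u ∧ p.2 ∈ u ∧ u.idxOf p.2 < u.idxOf p.1}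

/-- Schensted row insertion of `x` into a row: returns the new row together with the
bumped entry (if any). -/
def rowInsert : List ℕ → ℕ → List ℕ × Option ℕ
  | [], x => ([x], none)
  | a :: r, x =>
    if a ≤ x then
      let p := rowInsert r x
      (a :: p.1, p.2)
    else (x :: r, some a)

/-- Schensted insertion of `x` into a tableau (a list of rows). -/
def tabInsert : List (List ℕ) → ℕ → List (List ℕ)
  | [], x => [[x]]
  | row :: rest, x =>
    match rowInsert row x with
    | (row', none) => row' :: rest
    | (row', some b) => row' :: tabInsert rest b

/-- The RSK insertion tableau `P(w)` of a word `w`. -/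
def RSKP (w : List ℕ) : List (List ℕ) := w.foldl tabInsert []

/-- The shape of a tableau: the list of its row lengths. -/
def shape (T : List (List ℕ)) : List ℕ := T.map List.length

/-- `T` is a standard Young tableau with `n` cells: its entries are exactly `1, …, n`,
its rows are nonempty and strictly increasing, and its columns are strictly increasing
(in particular row lengths weakly decrease). -/
def IsSYT (n : ℕ) (T : List (List ℕ)) : Prop :=
  T.flatten.Perm (List.range' 1 n) ∧
  (∀ r ∈ T, r ≠ [] ∧ List.Chain' (· < ·) r) ∧
  List.Chain' (fun r₁ r₂ => r₂.length ≤ r₁.length ∧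
    ∀ c, c < r₂.length → r₁.getD c 0 < r₂.getD c 0) T

/-- The (skew) restriction of a tableau to the entries lying in the segment `[i, j]`. -/
def restrictTab (T : List (List ℕ)) (i j : ℕ) : List (List ℕ) :=
  T.map (List.filter (fun v => decide (i ≤ v ∧ v ≤ j)))

/-- The row reading word of a (skew) tableau: rows read left to right,
from the bottom row up. -/
def readWord (T : List (List ℕ)) : List ℕ := T.reverse.flatten

/-- The standardization `st(T_{[i,j]})` of the restriction of `T` to the segment `[i, j]`:
lower all entries by `i - 1` and rectify to straight shape by jeu de taquin; rectification
is computed as the RSK insertion tableau of the row reading word, which agrees with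
jeu de taquin rectification. -/
def stTab (T : List (List ℕ)) (i j : ℕ) : List (List ℕ) :=
  RSKP ((readWord (restrictTab T i j)).map (fun v => v - (i - 1)))

/-!
Knuth's theorem says that the insertion tableau `P(w)` depends only on the Knuth class of `w`,
and `w` is Knuth equivalent to the reading word of `P(w)`. The first half is proved one row
at a time: inserting the two sides of an elementary Knuth move into a row yields the same row,
and bumped words that are equal or again related by an elementary move. Keeping only the
letters in `[i, j]` and relabelling them order-preservingly sends every elementary Knuth move
either to an elementary Knuth move or to the identity (the letters of a move form an interval
of values). So the restricted reading word of `P(u)` is Knuth equivalent to the restriction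
of `u`, and both have the same insertion tableau.
-/

section RowInsertion

lemma rowInsert_nil (x : ℕ) : rowInsert [] x = ([x], none) := rfl

lemma rowInsert_cons_of_le {a x : ℕ} (h : a ≤ x) (r : List ℕ) :
    rowInsert (a :: r) x = (a :: (rowInsert r x).1, (rowInsert r x).2) := by
  simp [rowInsert, h]

lemma rowInsert_cons_of_lt {a x : ℕ} (h : x < a) (r : List ℕ) :
    rowInsert (a :: r) x = (x :: r, some a) := by
  simp [rowInsert, Nat.not_le_of_lt h]

lemma tabInsert_cons (R : List ℕ) (rest : List (List ℕ)) (x : ℕ) :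
    tabInsert (R :: rest) x =
      (rowInsert R x).1 :: (rowInsert R x).2.elim rest (tabInsert rest) := by
  rcases h : rowInsert R x with ⟨R', _ | b⟩ <;> simp [tabInsert, h]

variable {R : List ℕ} {x y z b c d : ℕ}

lemma lt_of_rowInsert_snd_eq_some (h : (rowInsert R x).2 = some b) : x < b := by
  induction R with
  | nil => simp [rowInsert_nil] at h
  | cons a r ih =>
    rcases le_or_gt a x with ha | ha
    · rw [rowInsert_cons_of_le ha] at h
      exact ih h
    · rw [rowInsert_cons_of_lt ha, Option.some.injEq] at h
      omega

lemma mem_of_rowInsert_snd_eq_some (h : (rowInsert R x).2 = some b) : b ∈ R := by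
  induction R with
  | nil => simp [rowInsert_nil] at h
  | cons a r ih =>
    rcases le_or_gt a x with ha | ha
    · rw [rowInsert_cons_of_le ha] at h
      exact List.mem_cons_of_mem a (ih h)
    · rw [rowInsert_cons_of_lt ha, Option.some.injEq] at h
      simp [h]

lemma rowInsert_snd_eq_none_iff : (rowInsert R x).2 = none ↔ ∀ a ∈ R, a ≤ x := by
  induction R with
  | nil => simp [rowInsert_nil]
  | cons a r ih =>
    rcases le_or_gt a x with ha | ha
    · simp [rowInsert_cons_of_le ha, ih, ha]
    · simp only [rowInsert_cons_of_lt ha, reduceCtorEq, false_iff, not_forall]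
      exact ⟨a, List.mem_cons_self, Nat.not_le_of_lt ha⟩

lemma rowInsert_fst_of_snd_eq_none (h : (rowInsert R x).2 = none) :
    (rowInsert R x).1 = R ++ [x] := by
  induction R with
  | nil => rfl
  | cons a r ih =>
    rcases le_or_gt a x with ha | ha
    · rw [rowInsert_cons_of_le ha] at h ⊢
      simp [ih h]
    · simp [rowInsert_cons_of_lt ha] at h

lemma mem_rowInsert_fst (h : c ∈ (rowInsert R x).1) : c ∈ R ∨ c = x := by
  induction R with
  | nil => simpa [rowInsert_nil] using h
  | cons a r ih =>
    rcases le_or_gt a x with ha | ha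
    · rw [rowInsert_cons_of_le ha, List.mem_cons] at h
      rcases h with rfl | h
      · simp
      · exact (ih h).imp_left (List.mem_cons_of_mem a)
    · rw [rowInsert_cons_of_lt ha, List.mem_cons] at h
      rcases h with rfl | h
      · simp
      · exact Or.inl (List.mem_cons_of_mem a h)

lemma self_mem_rowInsert_fst : x ∈ (rowInsert R x).1 := by
  induction R with
  | nil => simp [rowInsert_nil]
  | cons a r ih =>
    rcases le_or_gt a x with ha | ha
    · simp [rowInsert_cons_of_le ha, ih]
    · simp [rowInsert_cons_of_lt ha]

lemma rowInsert_fst_eq_cons_of_snd_eq_some (h : (rowInsert R x).2 = some b) :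
    ∃ c t, (rowInsert R x).1 = c :: t ∧ c ≤ x ∧ (c ∈ R ∨ c = x) := by
  cases R with
  | nil => simp [rowInsert_nil] at h
  | cons a r =>
    rcases le_or_gt a x with ha | ha
    · exact ⟨a, _, by rw [rowInsert_cons_of_le ha], ha, Or.inl List.mem_cons_self⟩
    · exact ⟨x, r, by rw [rowInsert_cons_of_lt ha], le_rfl, Or.inr rfl⟩

lemma rowInsert_sorted (hR : R.Pairwise (· ≤ ·)) (x : ℕ) :
    (rowInsert R x).1.Pairwise (· ≤ ·) := by
  induction R with
  | nil => simp [rowInsert_nil]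
  | cons a r ih =>
    obtain ⟨har, hr⟩ := List.pairwise_cons.1 hR
    rcases le_or_gt a x with ha | ha
    · rw [rowInsert_cons_of_le ha, List.pairwise_cons]
      refine ⟨fun c hc => ?_, ih hr⟩
      rcases mem_rowInsert_fst hc with hc | rfl
      exacts [har c hc, ha]
    · rw [rowInsert_cons_of_lt ha, List.pairwise_cons]
      exact ⟨fun c hc => (ha.trans_le (har c hc)).le, hr⟩

lemma rowInsert_snd_eq_none_of_le (hxy : x ≤ y) (h : (rowInsert R x).2 = none) :
    (rowInsert (rowInsert R x).1 y).2 = none := by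
  rw [rowInsert_snd_eq_none_iff, rowInsert_fst_of_snd_eq_none h]
  rw [rowInsert_snd_eq_none_iff] at h
  intro a ha
  rcases List.mem_append.1 ha with ha | ha
  · exact (h a ha).trans hxy
  · exact List.eq_of_mem_singleton ha ▸ hxy

lemma bump_le_bump_of_le (hR : R.Pairwise (· ≤ ·)) (hxy : x ≤ y)
    (hb : (rowInsert R x).2 = some b) (hc : (rowInsert (rowInsert R x).1 y).2 = some c) :
    b ≤ c := by
  induction R with
  | nil => simp [rowInsert_nil] at hb
  | cons a r ih =>
    obtain ⟨har, hr⟩ := List.pairwise_cons.1 hR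
    rcases le_or_gt a x with ha | ha
    · rw [rowInsert_cons_of_le ha] at hb hc
      rw [rowInsert_cons_of_le (ha.trans hxy)] at hc
      exact ih hr hb hc
    · rw [rowInsert_cons_of_lt ha, Option.some.injEq] at hb
      rw [rowInsert_cons_of_lt ha, rowInsert_cons_of_le hxy] at hc
      exact hb ▸ har c (mem_of_rowInsert_snd_eq_some hc)

lemma bump_lt_bump_of_lt (hR : R.Pairwise (· ≤ ·)) (hyz : y < z)
    (hc : (rowInsert R z).2 = some c) (hd : (rowInsert (rowInsert R z).1 y).2 = some d) :
    d < c := by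
  induction R with
  | nil => simp [rowInsert_nil] at hc
  | cons a r ih =>
    rcases le_or_gt a z with ha | ha
    · rw [rowInsert_cons_of_le ha] at hc hd
      rcases le_or_gt a y with hay | hya
      · rw [rowInsert_cons_of_le hay] at hd
        exact ih (List.pairwise_cons.1 hR).2 hc hd
      · rw [rowInsert_cons_of_lt hya, Option.some.injEq] at hd
        have := lt_of_rowInsert_snd_eq_some hc
        omega
    · rw [rowInsert_cons_of_lt ha, Option.some.injEq] at hc
      rw [rowInsert_cons_of_lt ha, rowInsert_cons_of_lt hyz, Option.some.injEq] at hd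
      omega

end RowInsertion

inductive KnuthMove : List ℕ → List ℕ → Prop
  | yxz {x y z : ℕ} : x < y → y ≤ z → KnuthMove [y, x, z] [y, z, x]
  | xzy {x y z : ℕ} : x ≤ y → y < z → KnuthMove [x, z, y] [z, x, y]

inductive KnuthStep : List ℕ → List ℕ → Prop
  | mk (l r : List ℕ) {a b : List ℕ} : KnuthMove a b → KnuthStep (l ++ a ++ r) (l ++ b ++ r)

def KnuthEquiv : List ℕ → List ℕ → Prop := Relation.EqvGen KnuthStep

namespace KnuthEquiv

lemma equivalence : Equivalence KnuthEquiv := Relation.EqvGen.is_equivalence KnuthStep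

@[refl] lemma refl (w : List ℕ) : KnuthEquiv w w := equivalence.refl w

@[symm] lemma symm {w w' : List ℕ} (h : KnuthEquiv w w') : KnuthEquiv w' w := equivalence.symm h

@[trans] lemma trans {w w' w'' : List ℕ} (h : KnuthEquiv w w') (h' : KnuthEquiv w' w'') :
    KnuthEquiv w w'' :=
  equivalence.trans h h'

lemma of_move {a b : List ℕ} (h : KnuthMove a b) : KnuthEquiv a b :=
  .rel _ _ (by simpa using KnuthStep.mk [] [] h)

lemma lift {α : Type*} {r : α → α → Prop} (hr : Equivalence r) {f : List ℕ → α}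
    (hf : ∀ {w w'}, KnuthStep w w' → r (f w) (f w')) {w w' : List ℕ} (h : KnuthEquiv w w') :
    r (f w) (f w') := by
  induction h with
  | rel _ _ h => exact hf h
  | refl => exact hr.refl _
  | symm _ _ _ ih => exact hr.symm ih
  | trans _ _ _ _ _ ih₁ ih₂ => exact hr.trans ih₁ ih₂

lemma congr {w w' : List ℕ} (h : KnuthEquiv w w') (l r : List ℕ) :
    KnuthEquiv (l ++ w ++ r) (l ++ w' ++ r) := by
  refine lift equivalence (f := fun w => l ++ w ++ r) (fun {w w'} hs => ?_) h
  obtain ⟨l', r', m⟩ := hs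
  exact .rel _ _ (by simpa using KnuthStep.mk (l ++ l') (r' ++ r) m)

lemma append_left {w w' : List ℕ} (h : KnuthEquiv w w') (l : List ℕ) :
    KnuthEquiv (l ++ w) (l ++ w') := by
  simpa using h.congr l []

lemma append_right {w w' : List ℕ} (h : KnuthEquiv w w') (r : List ℕ) :
    KnuthEquiv (w ++ r) (w' ++ r) := by
  simpa using h.congr [] r

end KnuthEquiv

section RowInsertWord

def rowInsertWord : List ℕ → List ℕ → List ℕ × List ℕ
  | R, [] => (R, [])
  | R, x :: w =>
    ((rowInsertWord (rowInsert R x).1 w).1,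
      (rowInsert R x).2.toList ++ (rowInsertWord (rowInsert R x).1 w).2)

lemma foldl_tabInsert_cons (R : List ℕ) (rest : List (List ℕ)) (w : List ℕ) :
    w.foldl tabInsert (R :: rest) =
      (rowInsertWord R w).1 :: (rowInsertWord R w).2.foldl tabInsert rest := by
  induction w generalizing R rest with
  | nil => rfl
  | cons x w ih =>
    rw [List.foldl_cons, tabInsert_cons, ih]
    rcases h : (rowInsert R x).2 with _ | b <;> simp [rowInsertWord, h]

lemma rowInsertWord_cons_of_forall_le {a : ℕ} {w : List ℕ} (h : ∀ c ∈ w, a ≤ c)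
    (R : List ℕ) :
    rowInsertWord (a :: R) w = (a :: (rowInsertWord R w).1, (rowInsertWord R w).2) := by
  induction w generalizing R with
  | nil => rfl
  | cons c w ih =>
    simp only [List.mem_cons, forall_eq_or_imp] at h
    simp [rowInsertWord, rowInsert_cons_of_le h.1, ih h.2]

def RowInsertionAgree (p q : List ℕ × List ℕ) : Prop :=
  p.1 = q.1 ∧ Relation.ReflGen (Relation.SymmGen KnuthMove) p.2 q.2

lemma RowInsertionAgree.cons_of_forall_le {R w w' : List ℕ} {a : ℕ}
    (h : RowInsertionAgree (rowInsertWord R w) (rowInsertWord R w'))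
    (hw : ∀ c ∈ w, a ≤ c) (hw' : ∀ c ∈ w', a ≤ c) :
    RowInsertionAgree (rowInsertWord (a :: R) w) (rowInsertWord (a :: R) w') := by
  rw [rowInsertWord_cons_of_forall_le hw, rowInsertWord_cons_of_forall_le hw']
  exact ⟨congrArg (a :: ·) h.1, h.2⟩

variable {R : List ℕ} {a x y z : ℕ}

lemma rowInsertWord_yxz_of_head_between_x_y (hR : R.Pairwise (· ≤ ·)) (hyz : y ≤ z)
    (hxa : x < a) (hay : a ≤ y) :
    RowInsertionAgree (rowInsertWord (a :: R) [y, x, z]) (rowInsertWord (a :: R) [y, z, x]) := by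
  simp only [rowInsertWord, rowInsert_cons_of_le hay, rowInsert_cons_of_lt hxa,
    rowInsert_cons_of_le (hay.trans hyz), rowInsert_cons_of_le (hxa.le.trans (hay.trans hyz))]
  refine ⟨rfl, ?_⟩
  rcases hb : (rowInsert R y).2 with _ | b
  · simp [rowInsert_snd_eq_none_of_le hyz hb, Relation.ReflGen.refl]
  rcases hc : (rowInsert (rowInsert R y).1 z).2 with _ | c
  · simp [Relation.ReflGen.refl]
  have hab : a < b := hay.trans_lt (lt_of_rowInsert_snd_eq_some hb)
  simpa using Relation.ReflGen.single (Relation.SymmGen.of_rel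
    (KnuthMove.yxz hab (bump_le_bump_of_le hR hyz hb hc)))

lemma rowInsertWord_yxz_of_head_between_y_z (hxy : x < y) (hya : y < a) (haz : a ≤ z) :
    RowInsertionAgree (rowInsertWord (a :: R) [y, x, z]) (rowInsertWord (a :: R) [y, z, x]) := by
  have hyz : y ≤ z := (hya.trans_le haz).le
  simp only [rowInsertWord, rowInsert_cons_of_lt hya, rowInsert_cons_of_lt hxy,
    rowInsert_cons_of_le (hxy.le.trans hyz), rowInsert_cons_of_le hyz]
  refine ⟨rfl, ?_⟩
  rcases hc : (rowInsert R z).2 with _ | c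
  · simp [Relation.ReflGen.refl]
  have hac : a ≤ c := haz.trans (lt_of_rowInsert_snd_eq_some hc).le
  simpa using Relation.ReflGen.single (Relation.SymmGen.of_rel (KnuthMove.yxz hya hac))

lemma rowInsertWord_yxz_of_z_lt_head (hR : (a :: R).Pairwise (· ≤ ·)) (hxy : x < y)
    (hyz : y ≤ z) (hza : z < a) :
    RowInsertionAgree (rowInsertWord (a :: R) [y, x, z]) (rowInsertWord (a :: R) [y, z, x]) := by
  have hya : y < a := hyz.trans_lt hza
  cases R with
  | nil =>
    simpa [rowInsertWord, rowInsert_cons_of_lt hya, rowInsert_cons_of_lt hxy,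
      rowInsert_cons_of_le (hxy.le.trans hyz), rowInsert_cons_of_le hyz, rowInsert_nil,
      RowInsertionAgree] using Relation.ReflGen.refl
  | cons r R =>
    have har : a ≤ r := List.rel_of_pairwise_cons hR List.mem_cons_self
    simpa [rowInsertWord, rowInsert_cons_of_lt hya, rowInsert_cons_of_lt hxy,
      rowInsert_cons_of_le (hxy.le.trans hyz), rowInsert_cons_of_le hyz,
      rowInsert_cons_of_lt (hza.trans_le har), RowInsertionAgree]
      using Relation.ReflGen.single (Relation.SymmGen.of_rel (KnuthMove.yxz hya har))

lemma rowInsertWord_xzy_of_head_between_x_z (hR : (a :: R).Pairwise (· ≤ ·)) (hxy : x ≤ y)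
    (hyz : y < z) (hxa : x < a) (haz : a ≤ z) :
    RowInsertionAgree (rowInsertWord (a :: R) [x, z, y]) (rowInsertWord (a :: R) [z, x, y]) := by
  simp only [rowInsertWord, rowInsert_cons_of_lt hxa, rowInsert_cons_of_le haz,
    rowInsert_cons_of_le (hxy.trans hyz.le), rowInsert_cons_of_le hxy]
  refine ⟨rfl, ?_⟩
  rcases hc : (rowInsert R z).2 with _ | c
  · simp [Relation.ReflGen.refl]
  obtain ⟨d, hd⟩ : ∃ d, (rowInsert (rowInsert R z).1 y).2 = some d := by
    refine Option.ne_none_iff_exists'.1 fun hnone => ?_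
    have := rowInsert_snd_eq_none_iff.1 hnone z self_mem_rowInsert_fst
    omega
  have had : a ≤ d := by
    rcases mem_rowInsert_fst (mem_of_rowInsert_snd_eq_some hd) with hdR | rfl
    exacts [List.rel_of_pairwise_cons hR hdR, haz]
  simpa [hd] using Relation.ReflGen.single (Relation.SymmGen.of_rel
    (KnuthMove.xzy had (bump_lt_bump_of_lt (List.pairwise_cons.1 hR).2 hyz hc hd)))

lemma rowInsertWord_xzy_of_z_lt_head (hR : (a :: R).Pairwise (· ≤ ·)) (hxy : x ≤ y)
    (hyz : y < z) (hza : z < a) :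
    RowInsertionAgree (rowInsertWord (a :: R) [x, z, y]) (rowInsertWord (a :: R) [z, x, y]) := by
  have hxz : x < z := hxy.trans_lt hyz
  cases R with
  | nil =>
    simpa [rowInsertWord, rowInsert_cons_of_lt (hxz.trans hza), rowInsert_cons_of_lt hza,
      rowInsert_cons_of_le hxz.le, rowInsert_cons_of_lt hyz, rowInsert_cons_of_lt hxz,
      rowInsert_cons_of_le hxy, rowInsert_nil, RowInsertionAgree]
      using Relation.ReflGen.refl
  | cons r R =>
    have har : a ≤ r := List.rel_of_pairwise_cons hR List.mem_cons_self
    simpa [rowInsertWord, rowInsert_cons_of_lt (hxz.trans hza), rowInsert_cons_of_lt hza,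
      rowInsert_cons_of_le hxz.le, rowInsert_cons_of_lt hyz, rowInsert_cons_of_lt hxz,
      rowInsert_cons_of_le hxy, rowInsert_cons_of_lt (hza.trans_le har),
      rowInsert_cons_of_lt ((hyz.trans hza).trans_le har), RowInsertionAgree]
      using Relation.ReflGen.single (Relation.SymmGen.of_rel_symm (KnuthMove.yxz hza har))

lemma rowInsertWord_agree_of_knuthMove (hR : R.Pairwise (· ≤ ·)) {w w' : List ℕ}
    (h : KnuthMove w w') : RowInsertionAgree (rowInsertWord R w) (rowInsertWord R w') := by
  induction R with
  | nil =>
    cases h with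
    | yxz hxy hyz =>
      simpa [rowInsertWord, rowInsert_nil, RowInsertionAgree, rowInsert_cons_of_lt hxy,
        rowInsert_cons_of_le hyz, rowInsert_cons_of_le (hxy.le.trans hyz)]
        using Relation.ReflGen.refl
    | xzy hxy hyz =>
      simpa [rowInsertWord, rowInsert_nil, RowInsertionAgree, rowInsert_cons_of_lt hyz,
        rowInsert_cons_of_le hxy, rowInsert_cons_of_le (hxy.trans hyz.le),
        rowInsert_cons_of_lt (hxy.trans_lt hyz)]
        using Relation.ReflGen.refl
  | cons a R ih =>
    have ih := ih (List.pairwise_cons.1 hR).2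
    cases h with
    | @yxz x y z hxy hyz =>
      rcases le_or_gt a x with hax | hxa
      · exact ih.cons_of_forall_le (by simp; omega) (by simp; omega)
      rcases le_or_gt a y with hay | hya
      · exact rowInsertWord_yxz_of_head_between_x_y (List.pairwise_cons.1 hR).2 hyz hxa hay
      rcases le_or_gt a z with haz | hza
      · exact rowInsertWord_yxz_of_head_between_y_z hxy hya haz
      · exact rowInsertWord_yxz_of_z_lt_head hR hxy hyz hza
    | @xzy x y z hxy hyz =>
      rcases le_or_gt a x with hax | hxa
      · exact ih.cons_of_forall_le (by simp; omega) (by simp; omega)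
      rcases le_or_gt a z with haz | hza
      · exact rowInsertWord_xzy_of_head_between_x_z hR hxy hyz hxa haz
      · exact rowInsertWord_xzy_of_z_lt_head hR hxy hyz hza

end RowInsertWord

def RowsSorted (T : List (List ℕ)) : Prop := ∀ r ∈ T, r.Pairwise (· ≤ ·)

lemma RowsSorted.tabInsert {T : List (List ℕ)} (hT : RowsSorted T) (x : ℕ) :
    RowsSorted (tabInsert T x) := by
  induction T generalizing x with
  | nil => simp [RowsSorted, _root_.tabInsert]
  | cons R rest ih =>
    have hrest : RowsSorted rest := fun r hr => hT r (List.mem_cons_of_mem R hr)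
    rw [tabInsert_cons]
    intro r hr
    rcases List.mem_cons.1 hr with rfl | hr
    · exact rowInsert_sorted (hT R List.mem_cons_self) x
    rcases hb : (rowInsert R x).2 with _ | b <;> rw [hb] at hr
    exacts [hrest r hr, ih hrest b r hr]

lemma rowsSorted_RSKP (w : List ℕ) : RowsSorted (RSKP w) := by
  induction w using List.reverseRecOn with
  | nil => simp [RowsSorted, RSKP]
  | append_singleton w x ih => simpa [RSKP] using ih.tabInsert x

lemma RSKP_append (u v : List ℕ) : RSKP (u ++ v) = v.foldl tabInsert (RSKP u) :=
  List.foldl_append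

lemma foldl_tabInsert_eq_of_knuthMove {T : List (List ℕ)} (hT : RowsSorted T) {w w' : List ℕ}
    (h : KnuthMove w w') : w.foldl tabInsert T = w'.foldl tabInsert T := by
  induction T generalizing w w' with
  | nil =>
    cases h with
    | yxz hxy hyz =>
      simp [rowInsert_nil, rowInsert_cons_of_lt hxy, rowInsert_cons_of_le hyz,
        rowInsert_cons_of_le (hxy.le.trans hyz), tabInsert]
    | xzy hxy hyz =>
      simp [rowInsert_nil, rowInsert_cons_of_lt hyz, rowInsert_cons_of_le hxy,
        rowInsert_cons_of_le (hxy.trans hyz.le), rowInsert_cons_of_lt (hxy.trans_lt hyz),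
        tabInsert]
  | cons R rest ih =>
    have hrest : RowsSorted rest := fun r hr => hT r (List.mem_cons_of_mem R hr)
    obtain ⟨hrow, hbumped⟩ :=
      rowInsertWord_agree_of_knuthMove (hT R List.mem_cons_self) h
    rw [foldl_tabInsert_cons, foldl_tabInsert_cons, hrow]
    rcases (Relation.reflGen_iff _ _ _).1 hbumped with heq | hm | hm
    · rw [heq]
    · rw [ih hrest hm]
    · rw [ih hrest hm]

lemma KnuthEquiv.RSKP_eq {w w' : List ℕ} (h : KnuthEquiv w w') : RSKP w = RSKP w' := by
  refine KnuthEquiv.lift eq_equivalence (fun {w w'} hs => ?_) h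
  obtain ⟨l, r, hm⟩ := hs
  rw [RSKP_append, RSKP_append, RSKP_append, RSKP_append,
    foldl_tabInsert_eq_of_knuthMove (rowsSorted_RSKP l) hm]

lemma readWord_cons (R : List ℕ) (rest : List (List ℕ)) :
    readWord (R :: rest) = readWord rest ++ R := by
  simp [readWord]

lemma knuthEquiv_cons_append_singleton {a x : ℕ} (hxa : x < a) (L : List ℕ)
    (hL : (a :: L).Pairwise (· ≤ ·)) : KnuthEquiv (a :: (L ++ [x])) (a :: x :: L) := by
  induction L generalizing a with
  | nil => rfl
  | cons c L ih =>
    have hac : a ≤ c := List.rel_of_pairwise_cons hL List.mem_cons_self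
    have hshift : KnuthEquiv (a :: c :: (L ++ [x])) (a :: c :: x :: L) :=
      (ih (hxa.trans_le hac) (List.pairwise_cons.1 hL).2).append_left [a]
    have hmove : KnuthEquiv (a :: c :: x :: L) (a :: x :: c :: L) :=
      (KnuthEquiv.of_move (KnuthMove.yxz hxa hac)).symm.append_right L
    exact hshift.trans hmove

lemma knuthEquiv_append_singleton_of_bump {R : List ℕ} {x b : ℕ} (hR : R.Pairwise (· ≤ ·))
    (h : (rowInsert R x).2 = some b) : KnuthEquiv (R ++ [x]) (b :: (rowInsert R x).1) := by
  induction R with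
  | nil => simp [rowInsert_nil] at h
  | cons a R ih =>
    obtain ⟨haR, hR⟩ := List.pairwise_cons.1 hR
    rcases le_or_gt a x with hax | hxa
    · rw [rowInsert_cons_of_le hax] at h ⊢
      obtain ⟨c, t, hct, hcx, hc⟩ := rowInsert_fst_eq_cons_of_snd_eq_some h
      have hac : a ≤ c := hc.elim (haR c) (· ▸ hax)
      have hcb : c < b := hcx.trans_lt (lt_of_rowInsert_snd_eq_some h)
      have hmove : KnuthEquiv (a :: b :: c :: t) (b :: a :: c :: t) :=
        (KnuthEquiv.of_move (KnuthMove.xzy hac hcb)).append_right t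
      rw [← hct] at hmove
      exact ((ih hR h).append_left [a]).trans hmove
    · rw [rowInsert_cons_of_lt hxa, Option.some.injEq] at h
      rw [rowInsert_cons_of_lt hxa, ← h]
      exact knuthEquiv_cons_append_singleton hxa R (List.pairwise_cons.2 ⟨haR, hR⟩)

lemma knuthEquiv_readWord_tabInsert {T : List (List ℕ)} (hT : RowsSorted T) (x : ℕ) :
    KnuthEquiv (readWord T ++ [x]) (readWord (tabInsert T x)) := by
  induction T generalizing x with
  | nil => rfl
  | cons R rest ih =>
    have hR : R.Pairwise (· ≤ ·) := hT R List.mem_cons_self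
    have hrest : RowsSorted rest := fun r hr => hT r (List.mem_cons_of_mem R hr)
    rw [tabInsert_cons, readWord_cons, readWord_cons]
    rcases hb : (rowInsert R x).2 with _ | b
    · simpa [rowInsert_fst_of_snd_eq_none hb] using KnuthEquiv.refl _
    · have hrow := (knuthEquiv_append_singleton_of_bump hR hb).append_left (readWord rest)
      have hbelow := (ih hrest b).append_right (rowInsert R x).1
      simp only [List.append_assoc, List.singleton_append] at hbelow
      simpa using hrow.trans hbelow

lemma knuthEquiv_readWord_RSKP (w : List ℕ) : KnuthEquiv w (readWord (RSKP w)) := by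
  induction w using List.reverseRecOn with
  | nil => rfl
  | append_singleton w x ih =>
    rw [RSKP_append]
    exact (ih.append_right [x]).trans (knuthEquiv_readWord_tabInsert (rowsSorted_RSKP w) x)

section Restriction

variable {i j : ℕ} {f : ℕ → ℕ}

lemma KnuthMove.filter_map {w w' : List ℕ} (h : KnuthMove w w')
    (hf : StrictMonoOn f (Set.Icc i j)) :
    Relation.ReflGen KnuthMove ((w.filter fun v => decide (i ≤ v ∧ v ≤ j)).map f)
      ((w'.filter fun v => decide (i ≤ v ∧ v ≤ j)).map f) := by
  cases h with
  | @yxz x y z hxy hyz =>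
    by_cases hx : i ≤ x ∧ x ≤ j
    · by_cases hz : i ≤ z ∧ z ≤ j
      · have hy : i ≤ y ∧ y ≤ j := by omega
        simp only [List.filter_cons, List.filter_nil, decide_eq_true_eq, hx, hy, hz]
        exact .single (.yxz (hf hx hy hxy) (hf.monotoneOn hy hz hyz))
      · simp only [List.filter_cons, List.filter_nil, decide_eq_true_eq, hz, if_false]
        exact .refl
    · simp only [List.filter_cons, List.filter_nil, decide_eq_true_eq, hx, if_false]
      exact .refl
  | @xzy x y z hxy hyz =>
    by_cases hx : i ≤ x ∧ x ≤ j
    · by_cases hz : i ≤ z ∧ z ≤ j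
      · have hy : i ≤ y ∧ y ≤ j := by omega
        simp only [List.filter_cons, List.filter_nil, decide_eq_true_eq, hx, hy, hz]
        exact .single (.xzy (hf.monotoneOn hx hy hxy) (hf hy hz hyz))
      · simp only [List.filter_cons, List.filter_nil, decide_eq_true_eq, hz, if_false]
        exact .refl
    · simp only [List.filter_cons, List.filter_nil, decide_eq_true_eq, hx, if_false]
      exact .refl

lemma KnuthEquiv.filter_map {w w' : List ℕ} (h : KnuthEquiv w w')
    (hf : StrictMonoOn f (Set.Icc i j)) :
    KnuthEquiv ((w.filter fun v => decide (i ≤ v ∧ v ≤ j)).map f)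
      ((w'.filter fun v => decide (i ≤ v ∧ v ≤ j)).map f) := by
  refine KnuthEquiv.lift KnuthEquiv.equivalence
    (f := fun w => (w.filter fun v => decide (i ≤ v ∧ v ≤ j)).map f) (fun {w w'} hs => ?_) h
  obtain ⟨l, r, hm⟩ := hs
  simp only [List.filter_append, List.map_append]
  rcases (Relation.reflGen_iff _ _ _).1 (hm.filter_map hf) with heq | hm'
  · rw [heq]
  · exact (KnuthEquiv.of_move hm').congr _ _

end Restriction

lemma readWord_restrictTab (T : List (List ℕ)) (i j : ℕ) :
    readWord (restrictTab T i j) = (readWord T).filter fun v => decide (i ≤ v ∧ v ≤ j) := by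
  simp [readWord, restrictTab, List.filter_flatten, List.map_reverse]

theorem st_restrict_insertion_tableau_general (u : List ℕ) (i j : ℕ) :
    stTab (RSKP u) i j =
      RSKP ((u.filter (fun v => decide (i ≤ v ∧ v ≤ j))).map (fun v => v - (i - 1))) := by
  have hshift : StrictMonoOn (fun v => v - (i - 1)) (Set.Icc i j) :=
    fun a ha b _ hab => by dsimp only; have := ha.1; omega
  rw [stTab, readWord_restrictTab]
  exact ((knuthEquiv_readWord_RSKP u).filter_map hshift).RSKP_eq.symm

/-- For `u ∈ Sₙ` and `1 ≤ i ≤ j ≤ n`, the standardization (via jeu de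
taquin) of the restriction of the RSK insertion tableau `P(u)` to the values `[i, j]`
equals the insertion tableau of the standardized subword `st(u_{[i,j]})`. -/
theorem st_restrict_insertion_tableau (n : ℕ) (u : List ℕ) (hu : IsPermWord n u)
    (i j : ℕ) (hi : 1 ≤ i) (hij : i ≤ j) (hj : j ≤ n) :
    stTab (RSKP u) i j =
      RSKP ((u.filter (fun v => decide (i ≤ v ∧ v ≤ j))).map (fun v => v - (i - 1))) :=
  st_restrict_insertion_tableau_general u i j
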